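/- arXiv:2311.01992 — 3 statements merged into one kernel-verified Lean document; each statement's English description precedes it below -/
import Mathlib

section
/- For every integer k ≥ 2 and every integer i with 2 ≤ i ≤ k, the ghost series on shelf 0 has the closed form tildeG_i = F(q)^{-1} · (1+q^2)^{-1} · ∑_{n ≥ 0} (-1)^n q^{(4k-2)·n(n-1)/2 + (2k+2i-5)n} (1 + q^{2(2n+1)}) (1 - q^{(2k-2i+1)(2n+1)}). -/
noncomputable section
namespace BGG

open PowerSeries

abbrev PS := PowerSeries ℂ
abbrev LS := LaurentSeries ℂ

/-- The canonical embedding of `ℂ[[q]]` into `ℂ((q))`. -/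
def toLS : PS →+* LS := HahnSeries.ofPowerSeries ℤ ℂ

/-- The formal variable `q`, as a Laurent series. -/
def qq : LS := toLS PowerSeries.X

/-- Coefficientwise infinite sum of a sequence of power series. -/
def seriesSum (f : ℕ → PS) : PS :=
  PowerSeries.mk fun N => ∑' n : ℕ, PowerSeries.coeff N (f n)

/-- The q-Pochhammer symbol `(b; p)_n = ∏_{m=0}^{n-1} (1 - b p^m)`. -/
def poch (b p : PS) (n : ℕ) : PS := ∏ m ∈ Finset.range n, (1 - b * p ^ m)

/-- `F(q) = ∏_{m ≥ 1, m ≢ 2 mod 4} (1 - q^m)`, defined coefficientwise via its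
(stabilizing) partial products. -/
def Fprod : PS :=
  PowerSeries.mk fun N =>
    PowerSeries.coeff N
      (∏ m ∈ Finset.Icc 1 N, if m % 4 = 2 then 1 else 1 - (X : PS) ^ m)

/-- The shelf-0 official series
`G_i = F(q)⁻¹ ∑_{n ≥ 0} (-1)^n q^{(4k-2)C(n,2) + (2i+2k-3)n} (1 - q^{(2k-2i+1)(2n+1)})`. -/
def Gbase (k i : ℕ) : LS :=
  (toLS Fprod)⁻¹ *
    toLS (seriesSum fun n =>
      (-1 : PS) ^ n * (X : PS) ^ ((4*k-2) * n.choose 2 + (2*i+2*k-3)*n) *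
        (1 - (X : PS) ^ ((2*k-2*i+1)*(2*n+1))))

/-- The ghost series on shelf `j`, given the official series `Gj` on shelf `j`:
`tildeG_{(k-1)j+i} = (G_{(k-1)j+i-1} + q^{2(j+1)} G_{(k-1)j+i+1})/(1+q^{2(j+1)})` for
`2 ≤ i ≤ k-1`, and
`tildeG_{(k-1)j+k} = (G_{(k-1)j+k-1} - q^{2j+1} G_{(k-1)j+k})/(1+q^{2(j+1)})`. -/
def ghostOf (k j : ℕ) (Gj : ℕ → LS) (i : ℕ) : LS :=
  if i = k then (Gj (k-1) - qq ^ (2*j+1) * Gj k) * (1 + qq ^ (2*j+2))⁻¹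
  else (Gj (i-1) + qq ^ (2*j+2) * Gj (i+1)) * (1 + qq ^ (2*j+2))⁻¹

/-- The official series on shelf `j+1`, given the official series `Gj` on shelf `j`:
`G_{(k-1)(j+1)+1} = G_{(k-1)j+k}` and, for `2 ≤ i ≤ k`,
`G_{(k-1)(j+1)+i} = q^{-2(j+1)(i-1)}(G_{(k-1)j+k-i+1} - tildeG_{(k-1)j+k-i+2})
                    - q^{-1} G_{(k-1)(j+1)+i-1}`. -/
def nextShelf (k j : ℕ) (Gj : ℕ → LS) : ℕ → LS
  | 0 => 0
  | 1 => Gj k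
  | (i+2) =>
      (Gj (k-(i+2)+1) - ghostOf k j Gj (k-(i+2)+2)) * (qq ^ (2*(j+1)*(i+1)))⁻¹
        - qq⁻¹ * nextShelf k j Gj (i+1)

/-- `Gsh k j i` is the official series `G_{(k-1)j+i}` (for `1 ≤ i ≤ k`). -/
def Gsh (k : ℕ) : ℕ → ℕ → LS
  | 0 => Gbase k
  | (j+1) => nextShelf k j (Gsh k j)

/-- `tGsh k j i` is the ghost series `tildeG_{(k-1)j+i}` (for `2 ≤ i ≤ k`). -/
def tGsh (k j : ℕ) : ℕ → LS := ghostOf k j (Gsh k j)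

/-! ### Auxiliary lemmas -/

lemma summable_coeff_of_vanish (N : ℕ) (f : ℕ → PS)
    (h : ∀ n, N < n → PowerSeries.coeff N (f n) = 0) :
    Summable fun n => PowerSeries.coeff N (f n) :=
  summable_of_ne_finset_zero (s := Finset.range (N + 1)) fun n hn =>
    h n (by simpa using hn)

lemma summable_main' (N e E c : ℕ) (hc : 1 ≤ c) (g : ℕ → PS) :
    Summable fun n => PowerSeries.coeff N
      ((X : PS) ^ e * ((-1 : PS) ^ n * (X : PS) ^ (E * n.choose 2 + c * n) * g n)) := by
  apply summable_coeff_of_vanish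
  intro n hn
  have hb : n ≤ c * n := Nat.le_mul_of_pos_left n (by omega)
  have h2 : c * n ≤ e + (E * n.choose 2 + c * n) :=
    le_trans (Nat.le_add_left _ _) (Nat.le_add_left _ _)
  have heq : (X : PS) ^ e * ((-1 : PS) ^ n * (X : PS) ^ (E * n.choose 2 + c * n) * g n)
      = (X : PS) ^ (e + (E * n.choose 2 + c * n)) * ((-1 : PS) ^ n * g n) := by
    rw [pow_add]; ring
  rw [heq, PowerSeries.coeff_X_pow_mul',
    if_neg (not_le.mpr (lt_of_lt_of_le (lt_of_lt_of_le hn hb) h2))]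

lemma summable_main (N E c : ℕ) (hc : 1 ≤ c) (g : ℕ → PS) :
    Summable fun n => PowerSeries.coeff N
      ((-1 : PS) ^ n * (X : PS) ^ (E * n.choose 2 + c * n) * g n) := by
  have := summable_main' N 0 E c hc g
  simpa using this

lemma seriesSum_add (f g : ℕ → PS)
    (hf : ∀ N, Summable fun n => PowerSeries.coeff N (f n))
    (hg : ∀ N, Summable fun n => PowerSeries.coeff N (g n)) :
    seriesSum (fun n => f n + g n) = seriesSum f + seriesSum g := by
  ext N
  simp only [seriesSum, PowerSeries.coeff_mk, map_add]
  exact Summable.tsum_add (hf N) (hg N)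

lemma seriesSum_sub (f g : ℕ → PS)
    (hf : ∀ N, Summable fun n => PowerSeries.coeff N (f n))
    (hg : ∀ N, Summable fun n => PowerSeries.coeff N (g n)) :
    seriesSum (fun n => f n - g n) = seriesSum f - seriesSum g := by
  ext N
  simp only [seriesSum, PowerSeries.coeff_mk, map_sub]
  exact Summable.tsum_sub (hf N) (hg N)

lemma X_pow_mul_seriesSum (e : ℕ) (f : ℕ → PS) :
    (X : PS) ^ e * seriesSum f = seriesSum fun n => (X : PS) ^ e * f n := by
  ext N
  by_cases h : e ≤ N
  · simp only [seriesSum, PowerSeries.coeff_mk, PowerSeries.coeff_X_pow_mul', if_pos h]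
  · simp only [seriesSum, PowerSeries.coeff_mk, PowerSeries.coeff_X_pow_mul', if_neg h, tsum_zero]

lemma term_lt (A c n : ℕ) :
    ((-1 : PS) ^ n * X ^ A * (1 - X ^ ((c+4)*(2*n+1))))
      + (X : PS) ^ 2 * ((-1 : PS) ^ n * X ^ (A + 4*n) * (1 - X ^ (c*(2*n+1))))
    = (-1 : PS) ^ n * X ^ A * (1 + X ^ (2*(2*n+1))) * (1 - X ^ ((c+2)*(2*n+1))) := by
  ring

lemma term_eq (A n : ℕ) :
    ((-1 : PS) ^ n * X ^ A * (1 - X ^ (3*(2*n+1))))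
      - (X : PS) ^ 1 * ((-1 : PS) ^ n * X ^ (A + 2*n) * (1 - X ^ (2*n+1)))
    = (-1 : PS) ^ n * X ^ A * (1 + X ^ (2*(2*n+1))) * (1 - X ^ (2*n+1)) := by
  ring

/-- closed form of the shelf-0 ghost series. -/
theorem stmt0 (k i : ℕ) (hk : 2 ≤ k) (hi2 : 2 ≤ i) (hik : i ≤ k) :
    tGsh k 0 i =
      (toLS Fprod)⁻¹ * (1 + qq ^ 2)⁻¹ *
        toLS (seriesSum fun n =>
          (-1 : PS) ^ n * (X : PS) ^ ((4*k-2) * n.choose 2 + (2*k+2*i-5)*n) *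
            (1 + (X : PS) ^ (2*(2*n+1))) *
            (1 - (X : PS) ^ ((2*k-2*i+1)*(2*n+1)))) := by
  by_cases hike : i = k
  · subst hike
    have hterm : ∀ n : ℕ,
        (-1 : PS) ^ n * (X : PS) ^ ((4*i-2) * n.choose 2 + (2*i+2*i-5)*n) *
            (1 + (X : PS) ^ (2*(2*n+1))) *
            (1 - (X : PS) ^ ((2*i-2*i+1)*(2*n+1)))
        = ((-1 : PS) ^ n * (X : PS) ^ ((4*i-2) * n.choose 2 + (2*(i-1)+2*i-3)*n) *
              (1 - (X : PS) ^ ((2*i-2*(i-1)+1)*(2*n+1))))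
          - (X : PS) ^ 1 * ((-1 : PS) ^ n * (X : PS) ^ ((4*i-2) * n.choose 2 + (2*i+2*i-3)*n) *
              (1 - (X : PS) ^ ((2*i-2*i+1)*(2*n+1)))) := by
      intro n
      rw [show (4*i-2) * n.choose 2 + (2*i+2*i-3)*n
            = ((4*i-2) * n.choose 2 + (2*i+2*i-5)*n) + 2*n by
          rw [show 2*i+2*i-3 = (2*i+2*i-5)+2 by omega]; ring,
        show 2*(i-1)+2*i-3 = 2*i+2*i-5 by omega,
        show 2*i-2*(i-1)+1 = 3 by omega,
        show 2*i-2*i+1 = 1 by omega, one_mul]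
      exact (term_eq _ n).symm
    have hsum : (seriesSum fun n =>
          (-1 : PS) ^ n * (X : PS) ^ ((4*i-2) * n.choose 2 + (2*i+2*i-5)*n) *
            (1 + (X : PS) ^ (2*(2*n+1))) *
            (1 - (X : PS) ^ ((2*i-2*i+1)*(2*n+1))))
        = (seriesSum fun n =>
            (-1 : PS) ^ n * (X : PS) ^ ((4*i-2) * n.choose 2 + (2*(i-1)+2*i-3)*n) *
              (1 - (X : PS) ^ ((2*i-2*(i-1)+1)*(2*n+1))))
          - (X : PS) ^ 1 * (seriesSum fun n =>
            (-1 : PS) ^ n * (X : PS) ^ ((4*i-2) * n.choose 2 + (2*i+2*i-3)*n) *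
              (1 - (X : PS) ^ ((2*i-2*i+1)*(2*n+1)))) := by
      rw [X_pow_mul_seriesSum, ← seriesSum_sub _ _
        (fun N => summable_main N (4*i-2) (2*(i-1)+2*i-3) (by omega) _)
        (fun N => summable_main' N 1 (4*i-2) (2*i+2*i-3) (by omega) _)]
      exact congrArg seriesSum (funext hterm)
    have h0 : tGsh i 0 i = (Gbase i (i-1) - qq ^ 1 * Gbase i i) * (1 + qq ^ 2)⁻¹ := by
      show ghostOf i 0 (Gsh i 0) i = _
      unfold ghostOf
      rw [if_pos rfl]; rfl
    rw [h0]
    unfold Gbase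
    rw [hsum, map_sub, map_mul, map_pow]
    have hqq : toLS X = qq := rfl
    rw [hqq]
    ring
  · have hlt : i < k := lt_of_le_of_ne hik hike
    have hterm : ∀ n : ℕ,
        (-1 : PS) ^ n * (X : PS) ^ ((4*k-2) * n.choose 2 + (2*k+2*i-5)*n) *
            (1 + (X : PS) ^ (2*(2*n+1))) *
            (1 - (X : PS) ^ ((2*k-2*i+1)*(2*n+1)))
        = ((-1 : PS) ^ n * (X : PS) ^ ((4*k-2) * n.choose 2 + (2*(i-1)+2*k-3)*n) *
              (1 - (X : PS) ^ ((2*k-2*(i-1)+1)*(2*n+1))))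
          + (X : PS) ^ 2 * ((-1 : PS) ^ n * (X : PS) ^ ((4*k-2) * n.choose 2 + (2*(i+1)+2*k-3)*n) *
              (1 - (X : PS) ^ ((2*k-2*(i+1)+1)*(2*n+1)))) := by
      intro n
      rw [show (4*k-2) * n.choose 2 + (2*(i+1)+2*k-3)*n
            = ((4*k-2) * n.choose 2 + (2*k+2*i-5)*n) + 4*n by
          rw [show 2*(i+1)+2*k-3 = (2*k+2*i-5)+4 by omega]; ring,
        show 2*(i-1)+2*k-3 = 2*k+2*i-5 by omega,
        show 2*k-2*(i-1)+1 = (2*k-2*i-1)+4 by omega,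
        show 2*k-2*(i+1)+1 = 2*k-2*i-1 by omega,
        show 2*k-2*i+1 = (2*k-2*i-1)+2 by omega]
      exact (term_lt _ _ n).symm
    have hsum : (seriesSum fun n =>
          (-1 : PS) ^ n * (X : PS) ^ ((4*k-2) * n.choose 2 + (2*k+2*i-5)*n) *
            (1 + (X : PS) ^ (2*(2*n+1))) *
            (1 - (X : PS) ^ ((2*k-2*i+1)*(2*n+1))))
        = (seriesSum fun n =>
            (-1 : PS) ^ n * (X : PS) ^ ((4*k-2) * n.choose 2 + (2*(i-1)+2*k-3)*n) *
              (1 - (X : PS) ^ ((2*k-2*(i-1)+1)*(2*n+1))))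
          + (X : PS) ^ 2 * (seriesSum fun n =>
            (-1 : PS) ^ n * (X : PS) ^ ((4*k-2) * n.choose 2 + (2*(i+1)+2*k-3)*n) *
              (1 - (X : PS) ^ ((2*k-2*(i+1)+1)*(2*n+1)))) := by
      rw [X_pow_mul_seriesSum, ← seriesSum_add _ _
        (fun N => summable_main N (4*k-2) (2*(i-1)+2*k-3) (by omega) _)
        (fun N => summable_main' N 2 (4*k-2) (2*(i+1)+2*k-3) (by omega) _)]
      exact congrArg seriesSum (funext hterm)
    have h0 : tGsh k 0 i = (Gbase k (i-1) + qq ^ 2 * Gbase k (i+1)) * (1 + qq ^ 2)⁻¹ := by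
      show ghostOf k 0 (Gsh k 0) i = _
      unfold ghostOf
      rw [if_neg hike]; rfl
    rw [h0]
    unfold Gbase
    rw [hsum, map_add, map_mul, map_pow]
    have hqq : toLS X = qq := rfl
    rw [hqq]
    ring

end BGG
end
end

section
/- For every integer k ≥ 2 and every integer i with 1 ≤ i ≤ k, one has tildetildeJ_{k,i}(a;x;q) = (1+xq)^{-1} · ∑_{n ≥ 0} (-a)^n q^{kn² − n(n-1)/2 + kn − (i+1)n} x^{(k-1)n} (−xq;q)_n (−1/a;q)_n (−axq^{n+2};q)_∞ / ((q²;q²)_n (xq^{n+1};q)_∞) · (1 + xq^{2n+1}) (1 − x^i q^{(2n+1)i} + axq^{n+1}(1 − x^{i−1} q^{(2n+1)(i−1)})). -/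
noncomputable section
namespace BGG3

abbrev MV := MvPowerSeries (Fin 3) ℂ

/-- The formal variable `a`. -/
def Av : MV := MvPowerSeries.X 0
/-- The formal variable `x`. -/
def Xv : MV := MvPowerSeries.X 1
/-- The formal variable `q`. -/
def Qv : MV := MvPowerSeries.X 2

/-- Extraction of the coefficient of `a^j x^m q^N` from a power series in `a, x, q`,
with integer exponents `m, N` (the coefficient being zero when `m < 0` or `N < 0`). -/
def coeffZ (P : MV) (j : ℕ) (m N : ℤ) : ℂ :=
  if 0 ≤ m ∧ 0 ≤ N then
    MvPowerSeries.coeff (R := ℂ)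
      (Finsupp.single 0 j + Finsupp.single 1 m.toNat + Finsupp.single 2 N.toNat) P
  else 0

/-- `(-a x q^{n+1}; q)_∞ = ∏_{m ≥ 0} (1 + a x q^{n+1+m})`, defined coefficientwise via
its (stabilizing) partial products. -/
def AXQinf (n : ℕ) : MV :=
  fun e => MvPowerSeries.coeff (R := ℂ) e
    (∏ m ∈ Finset.range (e 2 + 1), (1 + Av * Xv * Qv ^ (n+1+m)))

/-- `(x q^n; q)_∞ = ∏_{m ≥ 0} (1 - x q^{n+m})`, defined coefficientwise via its
(stabilizing) partial products. -/
def XQinf (n : ℕ) : MV :=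
  fun e => MvPowerSeries.coeff (R := ℂ) e
    (∏ m ∈ Finset.range (e 2 + 1), (1 - Xv * Qv ^ (n+m)))

/-- The part of the `n`-th term of `tildeH_{k,i}(a;x;q)` not depending on `i`:
`(-a)^n (-1/a;q)_n (-x;q)_n (-axq^{n+1};q)_∞ / ((q^2;q^2)_n (xq^n;q)_∞)`, where
`(-a)^n (-1/a;q)_n = ∏_{m=0}^{n-1} (a + q^m)`. -/
def Wser (k n : ℕ) : MV :=
  (∏ m ∈ Finset.range n, (Av + Qv ^ m)) * (∏ m ∈ Finset.range n, (1 + Xv * Qv ^ m))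
    * AXQinf n * (∏ m ∈ Finset.range n, (1 - Qv ^ (2*m+2)))⁻¹ * (XQinf n)⁻¹

/-- Coefficient functions of formal series in `a, x, q` (Laurent in `x` and `q`):
`f j m N` is the coefficient of `a^j x^m q^N`. -/
abbrev CF := ℕ → ℤ → ℤ → ℂ

/-- `tildeH_{k,i}(a;x;q) = ∑_{n ≥ 0} (-a)^n q^{kn²-C(n,2)+n-in} x^{(k-1)n}
(1 - x^i q^{2ni}) (-x;q)_n (-1/a;q)_n (-axq^{n+1};q)_∞ / ((q²;q²)_n (xq^n;q)_∞)`,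
as a coefficient function. -/
def tH3 (k : ℕ) (i : ℤ) : CF := fun j m N =>
  ∑' n : ℕ,
    (coeffZ (Wser k n) j (m - ((k:ℤ)-1)*(n:ℤ))
        (N - ((k:ℤ)*(n:ℤ)^2 - (n.choose 2 : ℤ) + (n:ℤ) - i*(n:ℤ)))
     - coeffZ (Wser k n) j (m - (((k:ℤ)-1)*(n:ℤ) + i))
        (N - ((k:ℤ)*(n:ℤ)^2 - (n.choose 2 : ℤ) + (n:ℤ) + i*(n:ℤ))))

/-- The substitution `x ↦ xq` on coefficient functions. -/
def subXq (f : CF) : CF := fun j m N => f j m (N - m)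

/-- Multiplication by `a·x·q` on coefficient functions. -/
def mulAXQ (f : CF) : CF := fun j m N => if j = 0 then 0 else f (j-1) (m-1) (N-1)

/-- Multiplication by `x` on coefficient functions. -/
def mulX (f : CF) : CF := fun j m N => f j (m-1) N

/-- Multiplication by `x^i` on coefficient functions. -/
def mulXpow (i : ℕ) (f : CF) : CF := fun j m N => f j (m - (i:ℤ)) N

/-- Multiplication by `(1+x)⁻¹ = ∑_{r ≥ 0} (-1)^r x^r` on coefficient functions. -/
def invOnePlusX (f : CF) : CF := fun j m N => ∑' r : ℕ, (-1 : ℂ)^r * f j (m - (r:ℤ)) N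

/-- Multiplication by `(1+xq)` on coefficient functions. -/
def mulOnePlusXQ (f : CF) : CF := fun j m N => f j m N + f j (m-1) (N-1)

/-- Multiplication by `(1+xq)⁻¹ = ∑_{r ≥ 0} (-1)^r x^r q^r` on coefficient functions. -/
def invOnePlusXQ (f : CF) : CF :=
  fun j m N => ∑' r : ℕ, (-1 : ℂ)^r * f j (m - (r:ℤ)) (N - (r:ℤ))

/-- `tildeJ_{k,i}(a;x;q) = tildeH_{k,i}(a;xq;q) + axq·tildeH_{k,i-1}(a;xq;q)`. -/
def tJ3 (k : ℕ) (i : ℤ) : CF := subXq (tH3 k i) + mulAXQ (subXq (tH3 k (i-1)))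

/-- `tildetildeH_{k,i}(a;x;q) = (tildeH_{k,i+1}(a;x;q) + x·tildeH_{k,i-1}(a;x;q))/(1+x)`. -/
def ttH3 (k : ℕ) (i : ℤ) : CF := invOnePlusX (tH3 k (i+1) + mulX (tH3 k (i-1)))

/-- `tildetildeJ_{k,i}(a;x;q) = tildetildeH_{k,i}(a;xq;q) + axq·tildetildeH_{k,i-1}(a;xq;q)`. -/
def ttJ3 (k : ℕ) (i : ℤ) : CF := subXq (ttH3 k i) + mulAXQ (subXq (ttH3 k (i-1)))

/-- The `n`-th term of the closed form of `(1+xq)·tildetildeJ_{k,i}(a;x;q)`. -/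
def Rterm (k i n : ℕ) : MV :=
  (∏ m ∈ Finset.range n, (Av + Qv ^ m))
  * Qv ^ (k*n^2 + k*n - n.choose 2 - (i+1)*n)
  * Xv ^ ((k-1)*n)
  * (∏ m ∈ Finset.range n, (1 + Xv * Qv ^ (m+1)))
  * AXQinf (n+1)
  * (∏ m ∈ Finset.range n, (1 - Qv ^ (2*m+2)))⁻¹
  * (XQinf (n+1))⁻¹
  * (1 + Xv * Qv ^ (2*n+1))
  * (1 - Xv ^ i * Qv ^ ((2*n+1)*i)
      + Av * Xv * Qv ^ (n+1) * (1 - Xv ^ (i-1) * Qv ^ ((2*n+1)*(i-1))))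

-- ===================== auxiliary development =====================
open MvPowerSeries Finsupp

/-- The exponent triple `a^j x^m q^N`. -/
def sing (j m N : ℕ) : Fin 3 →₀ ℕ :=
  Finsupp.single 0 j + Finsupp.single 1 m + Finsupp.single 2 N

@[simp] lemma sing_apply0 (j m N : ℕ) : sing j m N 0 = j := by
  simp [sing, Finsupp.single_apply]

@[simp] lemma sing_apply1 (j m N : ℕ) : sing j m N 1 = m := by
  simp [sing, Finsupp.single_apply]

@[simp] lemma sing_apply2 (j m N : ℕ) : sing j m N 2 = N := by
  simp [sing, Finsupp.single_apply]

lemma eq_sing (e : Fin 3 →₀ ℕ) : e = sing (e 0) (e 1) (e 2) := by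
  ext x
  fin_cases x <;> simp [sing, Finsupp.single_apply]

lemma coeffZ_eq (P : MV) (j : ℕ) (m N : ℤ) (hm : 0 ≤ m) (hN : 0 ≤ N) :
    coeffZ P j m N = MvPowerSeries.coeff (R := ℂ) (sing j m.toNat N.toNat) P := by
  rw [coeffZ, if_pos ⟨hm, hN⟩]; rfl

lemma coeffZ_neg_m (P : MV) (j : ℕ) {m : ℤ} (N : ℤ) (hm : m < 0) :
    coeffZ P j m N = 0 := by
  rw [coeffZ, if_neg]; rintro ⟨h, -⟩; omega

lemma coeffZ_neg_N (P : MV) (j : ℕ) (m : ℤ) {N : ℤ} (hN : N < 0) :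
    coeffZ P j m N = 0 := by
  rw [coeffZ, if_neg]; rintro ⟨-, h⟩; omega

lemma coeffZ_add (P Q : MV) (j : ℕ) (m N : ℤ) :
    coeffZ (P + Q) j m N = coeffZ P j m N + coeffZ Q j m N := by
  unfold coeffZ; split <;> simp

lemma coeffZ_sub (P Q : MV) (j : ℕ) (m N : ℤ) :
    coeffZ (P - Q) j m N = coeffZ P j m N - coeffZ Q j m N := by
  unfold coeffZ; split <;> simp

lemma coeffZ_zero (j : ℕ) (m N : ℤ) : coeffZ (0 : MV) j m N = 0 := by
  unfold coeffZ; split <;> simp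

lemma sing_sub1 (j m N s : ℕ) (hs : s ≤ m) :
    sing j m N - Finsupp.single 1 s = sing j (m - s) N := by
  ext x
  fin_cases x <;> simp [sing, Finsupp.single_apply, Finsupp.tsub_apply]

lemma sing_sub2 (j m N s : ℕ) (hs : s ≤ N) :
    sing j m N - Finsupp.single 2 s = sing j m (N - s) := by
  ext x
  fin_cases x <;> simp [sing, Finsupp.single_apply, Finsupp.tsub_apply]

lemma sing_sub0 (j m N : ℕ) :
    sing j m N - Finsupp.single 0 1 = sing (j - 1) m N := by
  ext x
  fin_cases x <;> simp [sing, Finsupp.single_apply, Finsupp.tsub_apply]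

lemma single_le_sing1 (j m N s : ℕ) :
    Finsupp.single (1 : Fin 3) s ≤ sing j m N ↔ s ≤ m := by
  rw [Finsupp.single_le_iff, sing_apply1]

lemma single_le_sing2 (j m N s : ℕ) :
    Finsupp.single (2 : Fin 3) s ≤ sing j m N ↔ s ≤ N := by
  rw [Finsupp.single_le_iff, sing_apply2]

lemma single_le_sing0 (j m N s : ℕ) :
    Finsupp.single (0 : Fin 3) s ≤ sing j m N ↔ s ≤ j := by
  rw [Finsupp.single_le_iff, sing_apply0]

/-- key bridge: coefficient of `x^s * P`. -/
lemma coeffZ_Xpow_mul (P : MV) (s : ℕ) (j : ℕ) (m N : ℤ) :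
    coeffZ (Xv ^ s * P) j m N = coeffZ P j (m - s) N := by
  rcases lt_or_ge m 0 with hm | hm
  · rw [coeffZ_neg_m _ _ _ hm, coeffZ_neg_m _ _ _ (by omega)]
  rcases lt_or_ge N 0 with hN | hN
  · rw [coeffZ_neg_N _ _ _ hN, coeffZ_neg_N _ _ _ hN]
  rcases lt_or_ge (m - s) 0 with hms | hms
  · rw [coeffZ_neg_m _ _ _ hms, coeffZ_eq _ _ _ _ hm hN]
    rw [Xv, MvPowerSeries.X_pow_eq, MvPowerSeries.coeff_monomial_mul, if_neg]
    rw [single_le_sing1]; omega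
  · rw [coeffZ_eq _ _ _ _ hm hN, coeffZ_eq _ _ _ _ (by omega) hN]
    rw [Xv, MvPowerSeries.X_pow_eq, MvPowerSeries.coeff_monomial_mul,
      if_pos ((single_le_sing1 _ _ _ _).2 (by omega)), one_mul,
      sing_sub1 _ _ _ _ (by omega)]
    have h' : m.toNat - s = (m - (s:ℤ)).toNat := by omega
    rw [h']

lemma coeffZ_X_mul (P : MV) (j : ℕ) (m N : ℤ) :
    coeffZ (Xv * P) j m N = coeffZ P j (m - 1) N := by
  have := coeffZ_Xpow_mul P 1 j m N
  rwa [pow_one, Nat.cast_one] at this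

lemma coeffZ_Qpow_mul (P : MV) (s : ℕ) (j : ℕ) (m N : ℤ) :
    coeffZ (Qv ^ s * P) j m N = coeffZ P j m (N - s) := by
  rcases lt_or_ge m 0 with hm | hm
  · rw [coeffZ_neg_m _ _ _ hm, coeffZ_neg_m _ _ _ hm]
  rcases lt_or_ge N 0 with hN | hN
  · rw [coeffZ_neg_N _ _ _ hN, coeffZ_neg_N _ _ _ (by omega)]
  rcases lt_or_ge (N - s) 0 with hNs | hNs
  · rw [coeffZ_neg_N _ _ _ hNs, coeffZ_eq _ _ _ _ hm hN]
    rw [Qv, MvPowerSeries.X_pow_eq, MvPowerSeries.coeff_monomial_mul, if_neg]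
    rw [single_le_sing2]; omega
  · rw [coeffZ_eq _ _ _ _ hm hN, coeffZ_eq _ _ _ _ hm (by omega)]
    rw [Qv, MvPowerSeries.X_pow_eq, MvPowerSeries.coeff_monomial_mul,
      if_pos ((single_le_sing2 _ _ _ _).2 (by omega)), one_mul,
      sing_sub2 _ _ _ _ (by omega)]
    have h' : N.toNat - s = (N - (s:ℤ)).toNat := by omega
    rw [h']

lemma coeffZ_Q_mul (P : MV) (j : ℕ) (m N : ℤ) :
    coeffZ (Qv * P) j m N = coeffZ P j m (N - 1) := by
  have := coeffZ_Qpow_mul P 1 j m N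
  rwa [pow_one, Nat.cast_one] at this

lemma coeffZ_A_mul (P : MV) (j : ℕ) (m N : ℤ) :
    coeffZ (Av * P) j m N = if j = 0 then 0 else coeffZ P (j - 1) m N := by
  rcases lt_or_ge m 0 with hm | hm
  · rw [coeffZ_neg_m _ _ _ hm, coeffZ_neg_m _ _ _ hm]; simp
  rcases lt_or_ge N 0 with hN | hN
  · rw [coeffZ_neg_N _ _ _ hN, coeffZ_neg_N _ _ _ hN]; simp
  rw [coeffZ_eq _ _ _ _ hm hN, coeffZ_eq _ _ _ _ hm hN]
  rcases Nat.eq_zero_or_pos j with hj | hj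
  · subst hj
    rw [if_pos rfl, Av, MvPowerSeries.X_def, MvPowerSeries.coeff_monomial_mul, if_neg]
    rw [single_le_sing0]; omega
  · rw [if_neg (by omega), Av, MvPowerSeries.X_def, MvPowerSeries.coeff_monomial_mul,
      if_pos ((single_le_sing0 _ _ _ _).2 (by omega)), one_mul, sing_sub0]

/-! ### The substitution `x ↦ x q` -/

/-- The substitution `x ↦ x q`, defined coefficientwise. -/
def sig (P : MV) : MV :=
  fun e => if e 1 ≤ e 2 then MvPowerSeries.coeff (R := ℂ) (e - Finsupp.single 2 (e 1)) P else 0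

lemma coeff_sig (P : MV) (e : Fin 3 →₀ ℕ) :
    MvPowerSeries.coeff (R := ℂ) e (sig P) =
      if e 1 ≤ e 2 then MvPowerSeries.coeff (R := ℂ) (e - Finsupp.single 2 (e 1)) P else 0 := rfl

@[simp] lemma apply21 (a : ℕ) : (Finsupp.single (2 : Fin 3) a) 1 = 0 := by
  simp [Finsupp.single_apply]

@[simp] lemma apply22 (a : ℕ) : (Finsupp.single (2 : Fin 3) a) 2 = a := by
  simp

lemma sig_add (P Q : MV) : sig (P + Q) = sig P + sig Q := by
  funext e
  show (if _ then _ else _) = sig P e + sig Q e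
  unfold sig
  split <;> simp [map_add]

lemma sig_zero : sig (0 : MV) = 0 := by
  funext e; unfold sig; split <;> rfl

lemma sig_one : sig (1 : MV) = 1 := by
  ext e
  by_cases he : e 1 ≤ e 2
  · rw [coeff_sig, if_pos he, MvPowerSeries.coeff_one, MvPowerSeries.coeff_one]
    by_cases h0 : e = 0
    · subst h0; simp
    · rw [if_neg, if_neg h0]
      intro hc
      apply h0
      have h1 : e 1 = 0 := by
        have := congrArg (fun f => f 1) hc
        simpa [Finsupp.tsub_apply] using this
      have h2 : e 2 = 0 := by
        have := congrArg (fun f => f 2) hc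
        simp [Finsupp.tsub_apply, h1] at this
        omega
      have h0' : e 0 = 0 := by
        have := congrArg (fun f => f 0) hc
        simpa [Finsupp.tsub_apply, Finsupp.single_apply] using this
      ext x
      fin_cases x <;> simp [h0', h1, h2]
  · have h0 : e ≠ 0 := by rintro rfl; simp at he
    rw [coeff_sig, if_neg he, MvPowerSeries.coeff_one, if_neg h0]

lemma sig_mul (P Q : MV) : sig (P * Q) = sig P * sig Q := by
  ext e
  by_cases he : e 1 ≤ e 2
  · rw [coeff_sig, if_pos he, MvPowerSeries.coeff_mul, MvPowerSeries.coeff_mul]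
    have hsle : Finsupp.single (2 : Fin 3) (e 1) ≤ e := Finsupp.single_le_iff.2 he
    rw [← Finset.sum_filter_of_ne
      (p := fun p : (Fin 3 →₀ ℕ) × (Fin 3 →₀ ℕ) => p.1 1 ≤ p.1 2 ∧ p.2 1 ≤ p.2 2)
      (f := fun p => MvPowerSeries.coeff (R := ℂ) p.1 (sig P) * MvPowerSeries.coeff (R := ℂ) p.2 (sig Q))
      (by
        intro p _ hp
        have hp' : MvPowerSeries.coeff (R := ℂ) p.1 (sig P) * MvPowerSeries.coeff (R := ℂ) p.2 (sig Q) ≠ 0 := hp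
        constructor
        · by_contra hc
          apply hp'
          rw [coeff_sig, if_neg hc, zero_mul]
        · by_contra hc
          apply hp'
          rw [coeff_sig (P := Q) (e := p.2), if_neg hc, mul_zero])]
    refine Finset.sum_nbij'
      (i := fun p => (p.1 + Finsupp.single 2 (p.1 1), p.2 + Finsupp.single 2 (p.2 1)))
      (j := fun p => (p.1 - Finsupp.single 2 (p.1 1), p.2 - Finsupp.single 2 (p.2 1)))
      ?_ ?_ ?_ ?_ ?_
    · intro p hp
      rw [Finset.HasAntidiagonal.mem_antidiagonal] at hp
      have h1 : p.1 1 + p.2 1 = e 1 := by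
        have := congrArg (fun f => f 1) hp
        simpa [Finsupp.tsub_apply] using this
      simp only [Finset.mem_filter, Finset.HasAntidiagonal.mem_antidiagonal]
      refine ⟨?_, ?_, ?_⟩
      · have : p.1 + Finsupp.single 2 (p.1 1) + (p.2 + Finsupp.single 2 (p.2 1))
            = p.1 + p.2 + Finsupp.single 2 (e 1) := by
          rw [← h1, Finsupp.single_add]; abel
        rw [this, hp, tsub_add_cancel_of_le hsle]
      · simp
      · simp
    · intro p hp
      simp only [Finset.mem_filter, Finset.HasAntidiagonal.mem_antidiagonal] at hp
      obtain ⟨hsum, hp1, hp2⟩ := hp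
      simp only [Finset.HasAntidiagonal.mem_antidiagonal]
      have h1 : p.1 1 + p.2 1 = e 1 := by
        have := congrArg (fun f => f 1) hsum
        simpa using this
      rw [tsub_add_tsub_comm (Finsupp.single_le_iff.2 hp1) (Finsupp.single_le_iff.2 hp2),
        hsum, ← Finsupp.single_add, h1]
    · intro p hp
      dsimp only
      have c1 : (p.1 + Finsupp.single (2 : Fin 3) (p.1 1)) 1 = p.1 1 := by simp
      have c2 : (p.2 + Finsupp.single (2 : Fin 3) (p.2 1)) 1 = p.2 1 := by simp
      rw [c1, c2, add_tsub_cancel_right, add_tsub_cancel_right]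
    · intro p hp
      simp only [Finset.mem_filter, Finset.HasAntidiagonal.mem_antidiagonal] at hp
      obtain ⟨-, hp1, hp2⟩ := hp
      dsimp only
      have e1 : (p.1 - Finsupp.single (2 : Fin 3) (p.1 1)) 1 = p.1 1 := by
        simp [Finsupp.tsub_apply]
      have e2 : (p.2 - Finsupp.single (2 : Fin 3) (p.2 1)) 1 = p.2 1 := by
        simp [Finsupp.tsub_apply]
      rw [e1, e2, tsub_add_cancel_of_le (Finsupp.single_le_iff.2 hp1),
        tsub_add_cancel_of_le (Finsupp.single_le_iff.2 hp2)]
    · intro p hp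
      dsimp only
      rw [coeff_sig (P := P) (e := p.1 + Finsupp.single 2 (p.1 1)),
        coeff_sig (P := Q) (e := p.2 + Finsupp.single 2 (p.2 1)),
        if_pos (by simp), if_pos (by simp)]
      have c1 : (p.1 + Finsupp.single (2 : Fin 3) (p.1 1)) 1 = p.1 1 := by simp
      have c2 : (p.2 + Finsupp.single (2 : Fin 3) (p.2 1)) 1 = p.2 1 := by simp
      rw [c1, c2, add_tsub_cancel_right, add_tsub_cancel_right]
  · rw [coeff_sig, if_neg he, MvPowerSeries.coeff_mul]
    symm
    apply Finset.sum_eq_zero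
    intro p hp
    rw [Finset.HasAntidiagonal.mem_antidiagonal] at hp
    have h1 : p.1 1 + p.2 1 = e 1 := by
      have := congrArg (fun f => f 1) hp; simpa using this
    have h2 : p.1 2 + p.2 2 = e 2 := by
      have := congrArg (fun f => f 2) hp; simpa using this
    have : ¬ (p.1 1 ≤ p.1 2) ∨ ¬ (p.2 1 ≤ p.2 2) := by omega
    show MvPowerSeries.coeff (R := ℂ) p.1 (sig P) * MvPowerSeries.coeff (R := ℂ) p.2 (sig Q) = 0
    rcases this with hc | hc
    · rw [coeff_sig, if_neg hc, zero_mul]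
    · rw [coeff_sig (P := Q) (e := p.2), if_neg hc, mul_zero]

/-- `sig` as a ring homomorphism. -/
def sigHom : MV →+* MV where
  toFun := sig
  map_one' := sig_one
  map_mul' := sig_mul
  map_zero' := sig_zero
  map_add' := sig_add

@[simp] lemma sigHom_apply (P : MV) : sigHom P = sig P := rfl

lemma sig_monomial (d : Fin 3 →₀ ℕ) (c : ℂ) :
    sig (MvPowerSeries.monomial (R := ℂ) d c)
      = MvPowerSeries.monomial (R := ℂ) (d + Finsupp.single 2 (d 1)) c := by
  ext e
  by_cases he : e 1 ≤ e 2
  · rw [coeff_sig, if_pos he, MvPowerSeries.coeff_monomial, MvPowerSeries.coeff_monomial]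
    congr 1
    apply propext
    constructor
    · rintro rfl
      have h1 : (e - Finsupp.single (2 : Fin 3) (e 1)) 1 = e 1 := by
        simp [Finsupp.tsub_apply]
      rw [h1, tsub_add_cancel_of_le (Finsupp.single_le_iff.2 he)]
    · rintro rfl
      have h1 : (d + Finsupp.single (2 : Fin 3) (d 1)) 1 = d 1 := by simp
      rw [h1, add_tsub_cancel_right]
  · rw [coeff_sig, if_neg he, MvPowerSeries.coeff_monomial, if_neg]
    rintro rfl
    apply he
    simp

lemma sig_Av : sig Av = Av := by
  rw [Av, MvPowerSeries.X_def, sig_monomial]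
  congr 1
  simp [Finsupp.single_apply]

lemma sig_Qv : sig Qv = Qv := by
  rw [Qv, MvPowerSeries.X_def, sig_monomial]
  congr 1
  simp [Finsupp.single_apply]

lemma sig_Xv : sig Xv = Xv * Qv := by
  have h : Finsupp.single (1 : Fin 3) 1 + Finsupp.single 2 ((Finsupp.single (1 : Fin 3) 1) 1)
      = Finsupp.single 1 1 + Finsupp.single 2 1 := by
    ext x
    fin_cases x <;> simp [Finsupp.single_apply]
  rw [Xv, Qv, MvPowerSeries.X_def, MvPowerSeries.X_def, sig_monomial,
    MvPowerSeries.monomial_mul_monomial, one_mul, h]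

lemma sig_constantCoeff (P : MV) :
    MvPowerSeries.constantCoeff (σ := Fin 3) (R := ℂ) (sig P)
      = MvPowerSeries.constantCoeff (σ := Fin 3) (R := ℂ) P := by
  rw [← MvPowerSeries.coeff_zero_eq_constantCoeff_apply, ← MvPowerSeries.coeff_zero_eq_constantCoeff_apply,
    coeff_sig]
  simp

lemma sig_inv (P : MV) (h : MvPowerSeries.constantCoeff (σ := Fin 3) (R := ℂ) P ≠ 0) :
    sig P⁻¹ = (sig P)⁻¹ := by
  symm
  rw [MvPowerSeries.inv_eq_iff_mul_eq_one (by rw [sig_constantCoeff]; exact h),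
    ← sig_mul, MvPowerSeries.inv_mul_cancel _ h, sig_one]

/-! ### Infinite products and `sig` -/

lemma coeff_eq_coeffZ (P : MV) (e : Fin 3 →₀ ℕ) :
    MvPowerSeries.coeff (R := ℂ) e P = coeffZ P (e 0) (e 1) (e 2) := by
  rw [coeffZ_eq _ _ _ _ (Int.natCast_nonneg _) (Int.natCast_nonneg _)]
  simp only [Int.toNat_natCast]
  exact congrArg (fun d => MvPowerSeries.coeff (R := ℂ) d P) (eq_sing e)

lemma coeff_q_high (R : MV) (e : Fin 3 →₀ ℕ) (t : ℕ) (ht : e 2 < t) :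
    MvPowerSeries.coeff (R := ℂ) e (Qv ^ t * R) = 0 := by
  rw [coeff_eq_coeffZ, coeffZ_Qpow_mul]
  exact coeffZ_neg_N _ _ _ (by omega)

lemma coeff_mul_one_add (P G : MV) (t : ℕ) (e : Fin 3 →₀ ℕ) (ht : e 2 < t) :
    MvPowerSeries.coeff (R := ℂ) e (P * (1 + G * Qv ^ t)) = MvPowerSeries.coeff (R := ℂ) e P := by
  have h : P * (1 + G * Qv ^ t) = P + Qv ^ t * (P * G) := by ring
  rw [h, map_add, coeff_q_high _ _ _ ht, add_zero]

lemma coeff_prod_stab (F G : ℕ → MV) (t : ℕ → ℕ)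
    (hF : ∀ m, F m = 1 + G m * Qv ^ (t m)) (e : Fin 3 →₀ ℕ) (M M' : ℕ)
    (hMM' : M ≤ M') (ht : ∀ m, M ≤ m → e 2 < t m) :
    MvPowerSeries.coeff (R := ℂ) e (∏ m ∈ Finset.range M', F m)
      = MvPowerSeries.coeff (R := ℂ) e (∏ m ∈ Finset.range M, F m) := by
  induction M', hMM' using Nat.le_induction with
  | base => rfl
  | succ M' hM' ih =>
    rw [Finset.prod_range_succ, hF M', coeff_mul_one_add _ _ _ _ (ht M' hM'), ih]

lemma coeff_AXQinf (n : ℕ) (e : Fin 3 →₀ ℕ) (M : ℕ) (hM : e 2 + 1 ≤ M) :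
    MvPowerSeries.coeff (R := ℂ) e (AXQinf n)
      = MvPowerSeries.coeff (R := ℂ) e (∏ m ∈ Finset.range M, (1 + Av * Xv * Qv ^ (n+1+m))) := by
  have h0 : MvPowerSeries.coeff (R := ℂ) e (AXQinf n)
      = MvPowerSeries.coeff (R := ℂ) e (∏ m ∈ Finset.range (e 2 + 1), (1 + Av * Xv * Qv ^ (n+1+m))) := rfl
  rw [h0, coeff_prod_stab _ (fun _ => Av * Xv) (fun m => n+1+m)
    (fun m => by rw [mul_assoc]) e (e 2 + 1) M hM (fun m hm => by omega)]

lemma coeff_XQinf (n : ℕ) (e : Fin 3 →₀ ℕ) (M : ℕ) (hM : e 2 + 1 ≤ M) :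
    MvPowerSeries.coeff (R := ℂ) e (XQinf n)
      = MvPowerSeries.coeff (R := ℂ) e (∏ m ∈ Finset.range M, (1 - Xv * Qv ^ (n+m))) := by
  have h0 : MvPowerSeries.coeff (R := ℂ) e (XQinf n)
      = MvPowerSeries.coeff (R := ℂ) e (∏ m ∈ Finset.range (e 2 + 1), (1 - Xv * Qv ^ (n+m))) := rfl
  rw [h0, coeff_prod_stab _ (fun _ => -Xv) (fun m => n+m)
    (fun m => by ring) e (e 2 + 1) M hM (fun m hm => by omega)]

lemma sig_prod_AX (n M : ℕ) :
    sig (∏ m ∈ Finset.range M, (1 + Av * Xv * Qv ^ (n+1+m)))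
      = ∏ m ∈ Finset.range M, (1 + Av * Xv * Qv ^ (n+2+m)) := by
  have h : sig (∏ m ∈ Finset.range M, (1 + Av * Xv * Qv ^ (n+1+m)))
      = sigHom (∏ m ∈ Finset.range M, (1 + Av * Xv * Qv ^ (n+1+m))) := rfl
  rw [h, map_prod]
  apply Finset.prod_congr rfl
  intro m _
  rw [map_add, map_one, map_mul, map_mul, map_pow, sigHom_apply, sigHom_apply, sigHom_apply,
    sig_Av, sig_Xv, sig_Qv]
  ring

lemma sig_prod_X (n M : ℕ) :
    sig (∏ m ∈ Finset.range M, (1 - Xv * Qv ^ (n+m)))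
      = ∏ m ∈ Finset.range M, (1 - Xv * Qv ^ (n+1+m)) := by
  have h : sig (∏ m ∈ Finset.range M, (1 - Xv * Qv ^ (n+m)))
      = sigHom (∏ m ∈ Finset.range M, (1 - Xv * Qv ^ (n+m))) := rfl
  rw [h, map_prod]
  apply Finset.prod_congr rfl
  intro m _
  rw [map_sub, map_one, map_mul, map_pow, sigHom_apply, sigHom_apply, sig_Xv, sig_Qv]
  ring

lemma sub2_apply2 (e : Fin 3 →₀ ℕ) :
    (e - Finsupp.single (2 : Fin 3) (e 1)) 2 = e 2 - e 1 := by
  simp [Finsupp.tsub_apply]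

lemma sig_AXQinf (n : ℕ) : sig (AXQinf n) = AXQinf (n + 1) := by
  ext e
  have key : MvPowerSeries.coeff (R := ℂ) e (AXQinf (n+1))
      = MvPowerSeries.coeff (R := ℂ) e (sig (∏ m ∈ Finset.range (e 2 + 1), (1 + Av * Xv * Qv ^ (n+1+m)))) := by
    rw [sig_prod_AX]
    rfl
  rw [key, coeff_sig, coeff_sig]
  by_cases he : e 1 ≤ e 2
  · rw [if_pos he, if_pos he]
    exact coeff_AXQinf n _ (e 2 + 1) (by rw [sub2_apply2]; omega)
  · rw [if_neg he, if_neg he]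

lemma sig_XQinf (n : ℕ) : sig (XQinf n) = XQinf (n + 1) := by
  ext e
  have key : MvPowerSeries.coeff (R := ℂ) e (XQinf (n+1))
      = MvPowerSeries.coeff (R := ℂ) e (sig (∏ m ∈ Finset.range (e 2 + 1), (1 - Xv * Qv ^ (n+m)))) := by
    rw [sig_prod_X]
    rfl
  rw [key, coeff_sig, coeff_sig]
  by_cases he : e 1 ≤ e 2
  · rw [if_pos he, if_pos he]
    exact coeff_XQinf n _ (e 2 + 1) (by rw [sub2_apply2]; omega)
  · rw [if_neg he, if_neg he]

lemma constCoeff_XQinf (n : ℕ) :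
    MvPowerSeries.constantCoeff (σ := Fin 3) (R := ℂ) (XQinf n) = 1 := by
  rw [← MvPowerSeries.coeff_zero_eq_constantCoeff_apply]
  rw [coeff_XQinf n 0 1 (by simp)]
  rw [Finset.prod_range_one, map_sub, add_zero, MvPowerSeries.coeff_zero_one]
  rw [coeff_eq_coeffZ]
  simp only [Finsupp.coe_zero, Pi.zero_apply, Nat.cast_zero]
  rw [coeffZ_X_mul]
  rw [coeffZ_neg_m _ _ _ (by omega)]
  ring

lemma constCoeff_prodD (M : ℕ) :
    MvPowerSeries.constantCoeff (σ := Fin 3) (R := ℂ) (∏ m ∈ Finset.range M, (1 - Qv ^ (2*m+2))) = 1 := by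
  rw [map_prod]
  apply Finset.prod_eq_one
  intro m _
  rw [map_sub, map_one, map_pow, Qv, MvPowerSeries.constantCoeff_X, zero_pow (by omega), sub_zero]

lemma sig_prodD (M : ℕ) :
    sig (∏ m ∈ Finset.range M, (1 - Qv ^ (2*m+2))) = ∏ m ∈ Finset.range M, (1 - Qv ^ (2*m+2)) := by
  have h : sig (∏ m ∈ Finset.range M, (1 - Qv ^ (2*m+2)))
      = sigHom (∏ m ∈ Finset.range M, (1 - Qv ^ (2*m+2))) := rfl
  rw [h, map_prod]
  apply Finset.prod_congr rfl
  intro m _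
  rw [map_sub, map_one, map_pow, sigHom_apply, sig_Qv]

lemma sig_prodP (M : ℕ) :
    sig (∏ m ∈ Finset.range M, (Av + Qv ^ m)) = ∏ m ∈ Finset.range M, (Av + Qv ^ m) := by
  have h : sig (∏ m ∈ Finset.range M, (Av + Qv ^ m))
      = sigHom (∏ m ∈ Finset.range M, (Av + Qv ^ m)) := rfl
  rw [h, map_prod]
  apply Finset.prod_congr rfl
  intro m _
  rw [map_add, map_pow, sigHom_apply, sigHom_apply, sig_Av, sig_Qv]

lemma sig_prodCx (M : ℕ) :
    sig (∏ m ∈ Finset.range M, (1 + Xv * Qv ^ (m+1)))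
      = ∏ m ∈ Finset.range M, (1 + Xv * Qv ^ (m+2)) := by
  have h : sig (∏ m ∈ Finset.range M, (1 + Xv * Qv ^ (m+1)))
      = sigHom (∏ m ∈ Finset.range M, (1 + Xv * Qv ^ (m+1))) := rfl
  rw [h, map_prod]
  apply Finset.prod_congr rfl
  intro m _
  rw [map_add, map_one, map_mul, map_pow, sigHom_apply, sigHom_apply, sig_Xv, sig_Qv]
  ring

lemma sig_XQinf_inv (n : ℕ) : sig (XQinf n)⁻¹ = (XQinf (n+1))⁻¹ := by
  rw [sig_inv _ (by rw [constCoeff_XQinf]; exact one_ne_zero), sig_XQinf]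

lemma sig_prodD_inv (M : ℕ) :
    sig (∏ m ∈ Finset.range M, (1 - Qv ^ (2*m+2)))⁻¹
      = (∏ m ∈ Finset.range M, (1 - Qv ^ (2*m+2)))⁻¹ := by
  rw [sig_inv _ (by rw [constCoeff_prodD]; exact one_ne_zero), sig_prodD]

lemma sig_Xpow (s : ℕ) : sig (Xv ^ s) = Xv ^ s * Qv ^ s := by
  have h : sig (Xv ^ s) = sigHom (Xv ^ s) := rfl
  rw [h, map_pow, sigHom_apply, sig_Xv, mul_pow]

lemma sig_Qpow (s : ℕ) : sig (Qv ^ s) = Qv ^ s := by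
  have h : sig (Qv ^ s) = sigHom (Qv ^ s) := rfl
  rw [h, map_pow, sigHom_apply, sig_Qv]

/-- `coeffZ` of a substituted series. -/
lemma coeffZ_sig (P : MV) (j : ℕ) (m N : ℤ) :
    coeffZ (sig P) j m N = coeffZ P j m (N - m) := by
  rcases lt_or_ge m 0 with hm | hm
  · rw [coeffZ_neg_m _ _ _ hm, coeffZ_neg_m _ _ _ hm]
  rcases lt_or_ge N 0 with hN | hN
  · rw [coeffZ_neg_N _ _ _ hN, coeffZ_neg_N _ _ _ (by omega)]
  rw [coeffZ_eq _ _ _ _ hm hN, coeff_sig]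
  rcases lt_or_ge (N - m) 0 with hNm | hNm
  · rw [if_neg (by rw [sing_apply1, sing_apply2]; omega), coeffZ_neg_N _ _ _ hNm]
  · rw [if_pos (by rw [sing_apply1, sing_apply2]; omega), coeffZ_eq _ _ _ _ hm (by omega)]
    have h1 : (sing j m.toNat N.toNat) 1 = m.toNat := sing_apply1 _ _ _
    rw [h1, sing_sub2 _ _ _ _ (by omega)]
    have h2 : N.toNat - m.toNat = (N - m).toNat := by omega
    rw [h2]

/-! ### Exponents and the per-`n` series -/

def cE (k i n : ℕ) : ℕ := k*n*n - (n.choose 2 + i*n)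

lemma cE_le (k i n : ℕ) (hik : i ≤ k) (hk : 1 ≤ k) : n.choose 2 + i*n ≤ k*n*n := by
  have hc : n.choose 2 ≤ n*(n-1) := by
    rw [Nat.choose_two_right]; exact Nat.div_le_self _ _
  have h1 : n*(n-1) + n = n*n := by
    cases n with
    | zero => simp
    | succ n' => simp [Nat.succ_sub_one]; ring
  have h2 : i*n ≤ k*n := Nat.mul_le_mul_right n hik
  have h3 : n*(n-1) ≤ k*(n*(n-1)) := Nat.le_mul_of_pos_left _ (by omega)
  have h4 : k*(n*(n-1)) + k*n = k*n*n := by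
    rw [← Nat.left_distrib, h1]; ring
  omega

lemma cE_pred (k i n : ℕ) (hik : i+1 ≤ k) : cE k i n = cE k (i+1) n + n := by
  have h1 := cE_le k (i+1) n hik (by omega)
  have h3 : (i+1)*n = i*n + n := by ring
  unfold cE
  omega

lemma cE_cast (k i n : ℕ) (hik : i ≤ k) (hk : 1 ≤ k) :
    ((cE k i n : ℕ) : ℤ) = (k:ℤ)*(n:ℤ)^2 - ((n.choose 2 : ℕ) : ℤ) - (i:ℤ)*(n:ℤ) := by
  have h1 := cE_le k i n hik hk
  unfold cE
  rw [Nat.cast_sub h1]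
  push_cast
  ring

lemma Rexp_eq (k i n : ℕ) (hk : 1 ≤ k) (hik : i ≤ k) :
    k*n^2 + k*n - n.choose 2 - (i+1)*n = cE k i n + (k-1)*n := by
  have h1 := cE_le k i n hik hk
  have h2 : n ≤ k*n := Nat.le_mul_of_pos_left n (by omega)
  have h3 : (i+1)*n = i*n + n := by ring
  have h4 : (k-1)*n = k*n - 1*n := by rw [Nat.sub_mul]
  have h5 : k*n^2 = k*n*n := by ring
  have h6 : 1*n = n := by ring
  unfold cE
  omega

lemma kn_cast (k n : ℕ) (hk : 1 ≤ k) : (((k-1)*n : ℕ) : ℤ) = ((k:ℤ)-1)*(n:ℤ) := by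
  rw [Nat.cast_mul, Nat.cast_sub (by exact_mod_cast hk)]
  push_cast
  ring

/-- The `n`-th term of `tildetildeH_{k,i}`. -/
def ttHterm (k i n : ℕ) : MV :=
  match n with
  | 0 => AXQinf 0 * (XQinf 0)⁻¹ * (1 - Xv ^ i)
  | n'+1 => Xv ^ ((k-1)*(n'+1)) * (Qv ^ (cE k i (n'+1))
      * ((∏ m ∈ Finset.range (n'+1), (Av + Qv ^ m))
        * (∏ m ∈ Finset.range n', (1 + Xv * Qv ^ (m+1)))
        * AXQinf (n'+1)
        * (∏ m ∈ Finset.range (n'+1), (1 - Qv ^ (2*m+2)))⁻¹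
        * (XQinf (n'+1))⁻¹
        * (1 + Xv * Qv ^ (2*(n'+1)))
        * (1 - Xv ^ i * Qv ^ (2*(n'+1)*i))))

/-- The summand of `tH3`. -/
def tHs (k : ℕ) (i : ℤ) (n j : ℕ) (m N : ℤ) : ℂ :=
  coeffZ (Wser k n) j (m - ((k:ℤ)-1)*(n:ℤ))
      (N - ((k:ℤ)*(n:ℤ)^2 - (n.choose 2 : ℤ) + (n:ℤ) - i*(n:ℤ)))
  - coeffZ (Wser k n) j (m - (((k:ℤ)-1)*(n:ℤ) + i))
      (N - ((k:ℤ)*(n:ℤ)^2 - (n.choose 2 : ℤ) + (n:ℤ) + i*(n:ℤ)))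

lemma tH3_eq (k : ℕ) (i : ℤ) (j : ℕ) (m N : ℤ) :
    tH3 k i j m N = ∑' n : ℕ, tHs k i n j m N := rfl

lemma tHs_vanish (k : ℕ) (i : ℤ) (n j : ℕ) (m N : ℤ) (hk : 2 ≤ k) (hi : -1 ≤ i)
    (hn : m + 1 < n) : tHs k i n j m N = 0 := by
  have h : (1:ℤ)*(n:ℤ) ≤ ((k:ℤ)-1)*(n:ℤ) :=
    mul_le_mul_of_nonneg_right (by push_cast; omega) (by positivity)
  unfold tHs
  rw [coeffZ_neg_m _ _ _ (by omega), coeffZ_neg_m _ _ _ (by omega), sub_zero]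

lemma ttHterm_vanish (k i n j : ℕ) (m N : ℤ) (hk : 2 ≤ k) (hn : m < n) :
    coeffZ (ttHterm k i n) j m N = 0 := by
  cases n with
  | zero => exact coeffZ_neg_m _ _ _ (by omega)
  | succ n' =>
    show coeffZ (Xv ^ ((k-1)*(n'+1)) * _) j m N = 0
    rw [coeffZ_Xpow_mul]
    refine coeffZ_neg_m _ _ _ ?_
    have h1 : (n'+1 : ℕ) ≤ (k-1)*(n'+1) := Nat.le_mul_of_pos_left _ (by omega)
    have h2 : ((n'+1 : ℕ) : ℤ) ≤ (((k-1)*(n'+1) : ℕ) : ℤ) := by exact_mod_cast h1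
    push_cast at h2 ⊢
    omega

lemma Rterm_vanish (k i n j : ℕ) (m N : ℤ) (hk : 2 ≤ k) (hn : m < n) :
    coeffZ (Rterm k i n) j m N = 0 := by
  cases n with
  | zero => exact coeffZ_neg_m _ _ _ (by omega)
  | succ n' =>
    have hR : Rterm k i (n'+1) = Xv ^ ((k-1)*(n'+1)) *
        ((∏ m ∈ Finset.range (n'+1), (Av + Qv ^ m))
          * Qv ^ (k*(n'+1)^2 + k*(n'+1) - (n'+1).choose 2 - (i+1)*(n'+1))
          * (∏ m ∈ Finset.range (n'+1), (1 + Xv * Qv ^ (m+1)))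
          * AXQinf (n'+1+1)
          * (∏ m ∈ Finset.range (n'+1), (1 - Qv ^ (2*m+2)))⁻¹
          * (XQinf (n'+1+1))⁻¹
          * (1 + Xv * Qv ^ (2*(n'+1)+1))
          * (1 - Xv ^ i * Qv ^ ((2*(n'+1)+1)*i)
              + Av * Xv * Qv ^ ((n'+1)+1) * (1 - Xv ^ (i-1) * Qv ^ ((2*(n'+1)+1)*(i-1))))) := by
      unfold Rterm
      ring
    rw [hR, coeffZ_Xpow_mul]
    refine coeffZ_neg_m _ _ _ ?_
    have h1 : (n'+1 : ℕ) ≤ (k-1)*(n'+1) := Nat.le_mul_of_pos_left _ (by omega)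
    have h2 : ((n'+1 : ℕ) : ℤ) ≤ (((k-1)*(n'+1) : ℕ) : ℤ) := by exact_mod_cast h1
    push_cast at h2 ⊢
    omega

/-! ### The per-`n` identities -/

lemma L1 (k i n : ℕ) (hk : 2 ≤ k) (hi : 1 ≤ i) (hik : i ≤ k) :
    Xv ^ ((k-1)*n) * (Qv ^ (cE k i n) * Wser k n)
      - Xv ^ ((k-1)*n + (i+1)) * (Qv ^ (cE k i n + 2*n*(i+1)) * Wser k n)
      + (Xv ^ ((k-1)*n + 1) * (Qv ^ (cE k i n + 2*n) * Wser k n)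
        - Xv ^ ((k-1)*n + i) * (Qv ^ (cE k i n + 2*n*i) * Wser k n))
      = (1 + Xv) * ttHterm k i n := by
  cases n with
  | zero =>
    have h0 : cE k i 0 = 0 := by simp [cE]
    unfold Wser
    simp only [ttHterm, h0, Finset.prod_range_zero, Nat.mul_zero, Nat.zero_mul, mul_zero,
      zero_mul, zero_add, add_zero, pow_zero, one_mul, mul_one, inv_one]
    ring
  | succ n' =>
    have hCx : (∏ m ∈ Finset.range (n'+1), (1 + Xv * Qv ^ m))
        = (1 + Xv) * ∏ m ∈ Finset.range n', (1 + Xv * Qv ^ (m+1)) := by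
      rw [Finset.prod_range_succ']
      ring
    unfold Wser
    rw [hCx]
    simp only [ttHterm]
    ring

lemma bridgeXQ (W : MV) (a b j : ℕ) (m N : ℤ) :
    coeffZ (Xv ^ a * (Qv ^ b * W)) j m N = coeffZ W j (m - a) (N - b) := by
  rw [coeffZ_Xpow_mul, coeffZ_Qpow_mul]

lemma stepA (k i n j : ℕ) (m N : ℤ) (hk : 2 ≤ k) (hi : 1 ≤ i) (hik : i ≤ k) :
    tHs k ((i:ℤ)+1) n j m N + tHs k ((i:ℤ)-1) n j (m-1) N
      = coeffZ (ttHterm k i n) j m N + coeffZ (ttHterm k i n) j (m-1) N := by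
  have hk1 : (1:ℕ) ≤ k := by omega
  have hc := cE_cast k i n hik hk1
  have hkn := kn_cast k n hk1
  have t1 : coeffZ (Xv ^ ((k-1)*n) * (Qv ^ (cE k i n) * Wser k n)) j m N
      = coeffZ (Wser k n) j (m - ((k:ℤ)-1)*(n:ℤ))
          (N - ((k:ℤ)*(n:ℤ)^2 - (n.choose 2 : ℤ) + (n:ℤ) - ((i:ℤ)+1)*(n:ℤ))) := by
    rw [bridgeXQ, hkn, show N - ((cE k i n : ℕ) : ℤ)
        = N - ((k:ℤ)*(n:ℤ)^2 - (n.choose 2 : ℤ) + (n:ℤ) - ((i:ℤ)+1)*(n:ℤ)) from by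
      rw [hc]; ring]
  have t2 : coeffZ (Xv ^ ((k-1)*n + (i+1)) * (Qv ^ (cE k i n + 2*n*(i+1)) * Wser k n)) j m N
      = coeffZ (Wser k n) j (m - (((k:ℤ)-1)*(n:ℤ) + ((i:ℤ)+1)))
          (N - ((k:ℤ)*(n:ℤ)^2 - (n.choose 2 : ℤ) + (n:ℤ) + ((i:ℤ)+1)*(n:ℤ))) := by
    rw [bridgeXQ, show m - (((k-1)*n + (i+1) : ℕ) : ℤ)
        = m - (((k:ℤ)-1)*(n:ℤ) + ((i:ℤ)+1)) from by
      rw [Nat.cast_add, hkn]; push_cast; ring,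
      show N - ((cE k i n + 2*n*(i+1) : ℕ) : ℤ)
        = N - ((k:ℤ)*(n:ℤ)^2 - (n.choose 2 : ℤ) + (n:ℤ) + ((i:ℤ)+1)*(n:ℤ)) from by
      rw [Nat.cast_add, hc]; push_cast; ring]
  have t3 : coeffZ (Xv ^ ((k-1)*n + 1) * (Qv ^ (cE k i n + 2*n) * Wser k n)) j m N
      = coeffZ (Wser k n) j (m - 1 - ((k:ℤ)-1)*(n:ℤ))
          (N - ((k:ℤ)*(n:ℤ)^2 - (n.choose 2 : ℤ) + (n:ℤ) - ((i:ℤ)-1)*(n:ℤ))) := by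
    rw [bridgeXQ, show m - (((k-1)*n + 1 : ℕ) : ℤ) = m - 1 - ((k:ℤ)-1)*(n:ℤ) from by
      rw [Nat.cast_add, hkn]; push_cast; ring,
      show N - ((cE k i n + 2*n : ℕ) : ℤ)
        = N - ((k:ℤ)*(n:ℤ)^2 - (n.choose 2 : ℤ) + (n:ℤ) - ((i:ℤ)-1)*(n:ℤ)) from by
      rw [Nat.cast_add, hc]; push_cast; ring]
  have t4 : coeffZ (Xv ^ ((k-1)*n + i) * (Qv ^ (cE k i n + 2*n*i) * Wser k n)) j m N
      = coeffZ (Wser k n) j (m - 1 - (((k:ℤ)-1)*(n:ℤ) + ((i:ℤ)-1)))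
          (N - ((k:ℤ)*(n:ℤ)^2 - (n.choose 2 : ℤ) + (n:ℤ) + ((i:ℤ)-1)*(n:ℤ))) := by
    rw [bridgeXQ, show m - (((k-1)*n + i : ℕ) : ℤ)
        = m - 1 - (((k:ℤ)-1)*(n:ℤ) + ((i:ℤ)-1)) from by
      rw [Nat.cast_add, hkn]; push_cast; ring,
      show N - ((cE k i n + 2*n*i : ℕ) : ℤ)
        = N - ((k:ℤ)*(n:ℤ)^2 - (n.choose 2 : ℤ) + (n:ℤ) + ((i:ℤ)-1)*(n:ℤ)) from by
      rw [Nat.cast_add, hc]; push_cast; ring]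
  unfold tHs
  rw [← t1, ← t2, ← t3, ← t4, ← coeffZ_sub, ← coeffZ_sub, ← coeffZ_add,
    L1 k i n hk hi hik,
    show (1 + Xv) * ttHterm k i n = ttHterm k i n + Xv * ttHterm k i n from by ring,
    coeffZ_add, coeffZ_X_mul]

lemma sig_binom1 (t : ℕ) : sig (1 + Xv * Qv ^ t) = 1 + Xv * Qv ^ (t+1) := by
  have h : sig (1 + Xv * Qv ^ t) = sigHom (1 + Xv * Qv ^ t) := rfl
  rw [h, map_add, map_one, map_mul, map_pow, sigHom_apply, sigHom_apply, sig_Xv, sig_Qv]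
  ring

lemma sig_binom2 (I t : ℕ) :
    sig (1 - Xv ^ I * Qv ^ t) = 1 - Xv ^ I * Qv ^ I * Qv ^ t := by
  have h : sig (1 - Xv ^ I * Qv ^ t) = sigHom (1 - Xv ^ I * Qv ^ t) := rfl
  rw [h, map_sub, map_one, map_mul, map_pow, map_pow, sigHom_apply, sigHom_apply,
    sig_Xv, sig_Qv, mul_pow]

lemma sig_ttHterm_succ (k I n' : ℕ) :
    sig (ttHterm k I (n'+1))
      = Xv ^ ((k-1)*(n'+1)) * Qv ^ ((k-1)*(n'+1)) * (Qv ^ (cE k I (n'+1))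
        * ((∏ m ∈ Finset.range (n'+1), (Av + Qv ^ m))
          * (∏ m ∈ Finset.range n', (1 + Xv * Qv ^ (m+2)))
          * AXQinf (n'+2)
          * (∏ m ∈ Finset.range (n'+1), (1 - Qv ^ (2*m+2)))⁻¹
          * (XQinf (n'+2))⁻¹
          * (1 + Xv * Qv ^ (2*(n'+1)+1))
          * (1 - Xv ^ I * Qv ^ I * Qv ^ (2*(n'+1)*I)))) := by
  show sig (Xv ^ ((k-1)*(n'+1)) * (Qv ^ (cE k I (n'+1))
      * ((∏ m ∈ Finset.range (n'+1), (Av + Qv ^ m))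
        * (∏ m ∈ Finset.range n', (1 + Xv * Qv ^ (m+1)))
        * AXQinf (n'+1)
        * (∏ m ∈ Finset.range (n'+1), (1 - Qv ^ (2*m+2)))⁻¹
        * (XQinf (n'+1))⁻¹
        * (1 + Xv * Qv ^ (2*(n'+1)))
        * (1 - Xv ^ I * Qv ^ (2*(n'+1)*I))))) = _
  rw [sig_mul, sig_mul, sig_mul, sig_mul, sig_mul, sig_mul, sig_mul, sig_mul,
    sig_Xpow, sig_Qpow, sig_prodP, sig_prodCx, sig_AXQinf, sig_prodD_inv, sig_XQinf_inv,
    sig_binom1, sig_binom2]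

lemma crux (k i n : ℕ) (hk : 2 ≤ k) (hi : 1 ≤ i) (hik : i ≤ k) :
    Rterm k i n
      = (1 + Xv * Qv) * (sig (ttHterm k i n) + Av * Xv * Qv * sig (ttHterm k (i-1) n)) := by
  obtain ⟨i', rfl⟩ : ∃ i', i = i' + 1 := ⟨i-1, by omega⟩
  simp only [Nat.add_sub_cancel]
  cases n with
  | zero =>
    have hs1 : sig (ttHterm k (i'+1) 0)
        = AXQinf 1 * (XQinf 1)⁻¹ * (1 - Xv ^ (i'+1) * Qv ^ (i'+1)) := by
      show sig (AXQinf 0 * (XQinf 0)⁻¹ * (1 - Xv ^ (i'+1))) = _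
      rw [sig_mul, sig_mul, sig_AXQinf, sig_XQinf_inv]
      congr 1
      have h : sig (1 - Xv ^ (i'+1)) = sigHom (1 - Xv ^ (i'+1)) := rfl
      rw [h, map_sub, map_one, map_pow, sigHom_apply, sig_Xv, mul_pow]
    have hs0 : sig (ttHterm k i' 0)
        = AXQinf 1 * (XQinf 1)⁻¹ * (1 - Xv ^ i' * Qv ^ i') := by
      show sig (AXQinf 0 * (XQinf 0)⁻¹ * (1 - Xv ^ i')) = _
      rw [sig_mul, sig_mul, sig_AXQinf, sig_XQinf_inv]
      congr 1
      have h : sig (1 - Xv ^ i') = sigHom (1 - Xv ^ i') := rfl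
      rw [h, map_sub, map_one, map_pow, sigHom_apply, sig_Xv, mul_pow]
    rw [hs1, hs0]
    unfold Rterm
    simp only [Nat.add_sub_cancel, Finset.prod_range_zero, Nat.mul_zero, Nat.zero_mul,
      mul_zero, zero_mul, pow_zero, one_mul, mul_one, inv_one, zero_add, add_zero,
      Nat.choose_self]
    have hch : (0:ℕ).choose 2 = 0 := rfl
    rw [hch]
    norm_num
    ring
  | succ n' =>
    have hE := Rexp_eq k (i'+1) (n'+1) (by omega) hik
    have hE2 := cE_pred k i' (n'+1) (by omega)
    have hCx : (∏ m ∈ Finset.range (n'+1), (1 + Xv * Qv ^ (m+1)))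
        = (∏ m ∈ Finset.range n', (1 + Xv * Qv ^ (m+2))) * (1 + Xv * Qv) := by
      rw [Finset.prod_range_succ']
      have h1 : ∀ x : ℕ, x + 1 + 1 = x + 2 := fun x => rfl
      simp only [h1, zero_add, pow_one]
    rw [sig_ttHterm_succ k (i'+1) n', sig_ttHterm_succ k i' n', hE2]
    unfold Rterm
    simp only [Nat.add_sub_cancel]
    rw [hE, hCx]
    ring

/-! ### Summation plumbing -/

lemma tsum_eq_range {f : ℕ → ℂ} (B : ℕ) (h : ∀ n, B ≤ n → f n = 0) :
    ∑' n, f n = ∑ n ∈ Finset.range B, f n :=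
  tsum_eq_sum (fun b hb => h b (by simp [Finset.mem_range] at hb; omega))

lemma telescopeX (a : ℤ → ℂ) (h0 : ∀ m', m' < 0 → a m' = 0) (m : ℤ) :
    ∑' r : ℕ, (-1:ℂ)^r * (a (m - r) + a (m - r - 1)) = a m := by
  set f : ℕ → ℂ := fun s => (-1:ℂ)^s * a (m - s) with hf
  have hsupp : ∀ r : ℕ, m.toNat + 1 ≤ r → (-1:ℂ)^r * (a (m - r) + a (m - r - 1)) = 0 := by
    intro r hr
    rw [h0 _ (by omega), h0 _ (by omega)]
    ring
  rw [tsum_eq_range (m.toNat + 1) hsupp]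
  have key : ∀ r : ℕ, (-1:ℂ)^r * (a (m - r) + a (m - r - 1)) = f r - f (r+1) := by
    intro r
    have harg : m - ((r+1 : ℕ) : ℤ) = m - r - 1 := by push_cast; ring
    simp only [hf]
    rw [harg, pow_succ]
    ring
  calc ∑ r ∈ Finset.range (m.toNat + 1), (-1:ℂ)^r * (a (m - r) + a (m - r - 1))
      = ∑ r ∈ Finset.range (m.toNat + 1), (f r - f (r+1)) :=
        Finset.sum_congr rfl fun r _ => key r
    _ = f 0 - f (m.toNat + 1) := Finset.sum_range_sub' f (m.toNat + 1)
    _ = a m := by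
        simp only [hf]
        rw [h0 (m - ((m.toNat + 1 : ℕ) : ℤ)) (by omega)]
        simp

lemma telescopeXQ (a : ℤ → ℤ → ℂ) (h0 : ∀ m' N', m' < 0 → a m' N' = 0) (m N : ℤ) :
    ∑' r : ℕ, (-1:ℂ)^r * (a (m - r) (N - r) + a (m - r - 1) (N - r - 1)) = a m N := by
  set f : ℕ → ℂ := fun s => (-1:ℂ)^s * a (m - s) (N - s) with hf
  have hsupp : ∀ r : ℕ, m.toNat + 1 ≤ r →
      (-1:ℂ)^r * (a (m - r) (N - r) + a (m - r - 1) (N - r - 1)) = 0 := by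
    intro r hr
    rw [h0 _ _ (by omega), h0 _ _ (by omega)]
    ring
  rw [tsum_eq_range (m.toNat + 1) hsupp]
  have key : ∀ r : ℕ, (-1:ℂ)^r * (a (m - r) (N - r) + a (m - r - 1) (N - r - 1))
      = f r - f (r+1) := by
    intro r
    have harg : m - ((r+1 : ℕ) : ℤ) = m - r - 1 := by push_cast; ring
    have harg2 : N - ((r+1 : ℕ) : ℤ) = N - r - 1 := by push_cast; ring
    simp only [hf]
    rw [harg, harg2, pow_succ]
    ring
  calc ∑ r ∈ Finset.range (m.toNat + 1),
        (-1:ℂ)^r * (a (m - r) (N - r) + a (m - r - 1) (N - r - 1))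
      = ∑ r ∈ Finset.range (m.toNat + 1), (f r - f (r+1)) :=
        Finset.sum_congr rfl fun r _ => key r
    _ = f 0 - f (m.toNat + 1) := Finset.sum_range_sub' f (m.toNat + 1)
    _ = a m N := by
        simp only [hf]
        rw [h0 (m - ((m.toNat + 1 : ℕ) : ℤ)) _ (by omega)]
        simp

/-! ### Assembly -/

/-- The coefficient function of `tildetildeH_{k,i}`. -/
def Fcf (k i : ℕ) : CF := fun j m N => ∑' n : ℕ, coeffZ (ttHterm k i n) j m N

lemma Fcf_vanish (k i j : ℕ) (m N : ℤ) (hm : m < 0) : Fcf k i j m N = 0 := by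
  unfold Fcf
  rw [tsum_congr (fun n : ℕ => coeffZ_neg_m (ttHterm k i n) j N hm)]
  exact tsum_zero

lemma Fcf_zero (k j : ℕ) (m N : ℤ) : Fcf k 0 j m N = 0 := by
  unfold Fcf
  have hz : ∀ n : ℕ, ttHterm k 0 n = 0 := by
    intro n
    cases n with
    | zero => simp [ttHterm]
    | succ n' => simp [ttHterm]
  rw [tsum_congr (fun n : ℕ => by rw [hz n, coeffZ_zero])]
  exact tsum_zero

lemma sumA (k i : ℕ) (hk : 2 ≤ k) (hi : 1 ≤ i) (hik : i ≤ k) (j : ℕ) (m N : ℤ) :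
    tH3 k ((i:ℤ)+1) j m N + tH3 k ((i:ℤ)-1) j (m-1) N = Fcf k i j m N + Fcf k i j (m-1) N := by
  rw [tH3_eq, tH3_eq]
  unfold Fcf
  rw [tsum_eq_range (m.toNat + 2)
      (fun n hn => tHs_vanish k ((i:ℤ)+1) n j m N hk (by omega) (by omega)),
    tsum_eq_range (m.toNat + 2)
      (fun n hn => tHs_vanish k ((i:ℤ)-1) n j (m-1) N hk (by omega) (by omega)),
    tsum_eq_range (m.toNat + 2)
      (fun n hn => ttHterm_vanish k i n j m N hk (by omega)),
    tsum_eq_range (m.toNat + 2)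
      (fun n hn => ttHterm_vanish k i n j (m-1) N hk (by omega)),
    ← Finset.sum_add_distrib, ← Finset.sum_add_distrib]
  exact Finset.sum_congr rfl fun n _ => stepA k i n j m N hk hi hik

lemma ttH3_eq_F (k i : ℕ) (hk : 2 ≤ k) (hi : 1 ≤ i) (hik : i ≤ k) (j : ℕ) (m N : ℤ) :
    ttH3 k (i:ℤ) j m N = Fcf k i j m N := by
  unfold ttH3 invOnePlusX
  have hin : ∀ r : ℕ, (tH3 k ((i:ℤ)+1) + mulX (tH3 k ((i:ℤ)-1))) j (m - r) N
      = Fcf k i j (m - r) N + Fcf k i j (m - r - 1) N := by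
    intro r
    have h := sumA k i hk hi hik j (m - r) N
    simpa [mulX, Pi.add_apply] using h
  rw [tsum_congr (fun r : ℕ => by rw [hin r])]
  exact telescopeX (fun m' => Fcf k i j m' N) (fun m' hm' => Fcf_vanish k i j m' N hm') m

lemma tHs_negone (k n j : ℕ) (m N : ℤ) :
    tHs k ((0:ℤ)-1) n j (m-1) N = - tHs k ((0:ℤ)+1) n j m N := by
  unfold tHs
  have e1 : m - 1 - ((k:ℤ)-1)*(n:ℤ) = m - (((k:ℤ)-1)*(n:ℤ) + ((0:ℤ)+1)) := by ring
  have e2 : m - 1 - (((k:ℤ)-1)*(n:ℤ) + ((0:ℤ)-1)) = m - ((k:ℤ)-1)*(n:ℤ) := by ring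
  have e3 : N - ((k:ℤ)*(n:ℤ)^2 - (n.choose 2:ℤ) + (n:ℤ) - ((0:ℤ)-1)*(n:ℤ))
      = N - ((k:ℤ)*(n:ℤ)^2 - (n.choose 2:ℤ) + (n:ℤ) + ((0:ℤ)+1)*(n:ℤ)) := by ring
  have e4 : N - ((k:ℤ)*(n:ℤ)^2 - (n.choose 2:ℤ) + (n:ℤ) + ((0:ℤ)-1)*(n:ℤ))
      = N - ((k:ℤ)*(n:ℤ)^2 - (n.choose 2:ℤ) + (n:ℤ) - ((0:ℤ)+1)*(n:ℤ)) := by ring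
  rw [e1, e2, e3, e4]
  ring

lemma ttH3_zero (k : ℕ) (j : ℕ) (m N : ℤ) : ttH3 k 0 j m N = 0 := by
  unfold ttH3 invOnePlusX
  have hz : ∀ r : ℕ, (tH3 k ((0:ℤ)+1) + mulX (tH3 k ((0:ℤ)-1))) j (m - r) N = 0 := by
    intro r
    simp only [Pi.add_apply, mulX]
    rw [tH3_eq, tH3_eq, tsum_congr (fun n : ℕ => tHs_negone k n j (m - r) N), tsum_neg]
    ring
  rw [tsum_congr (fun r : ℕ => by rw [hz r, mul_zero])]
  exact tsum_zero

lemma ttH3_pred (k i : ℕ) (hk : 2 ≤ k) (hi : 1 ≤ i) (hik : i ≤ k) (j : ℕ) (m N : ℤ) :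
    ttH3 k ((i:ℤ)-1) j m N = Fcf k (i-1) j m N := by
  rcases Nat.lt_or_ge 1 i with h2 | h2
  · have hc : (i:ℤ)-1 = ((i-1 : ℕ) : ℤ) := by push_cast [Nat.cast_sub (by omega : 1 ≤ i)]; ring
    rw [hc]
    exact ttH3_eq_F k (i-1) hk (by omega) (by omega) j m N
  · have hi1 : i = 1 := by omega
    subst hi1
    have hc : ((1:ℕ):ℤ)-1 = (0:ℤ) := by norm_num
    rw [hc, ttH3_zero, Fcf_zero]

lemma ttJ3_eq (k i : ℕ) (hk : 2 ≤ k) (hi : 1 ≤ i) (hik : i ≤ k) (j : ℕ) (m N : ℤ) :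
    ttJ3 k (i:ℤ) j m N = Fcf k i j m (N - m)
      + (if j = 0 then 0 else Fcf k (i-1) (j-1) (m-1) (N - m)) := by
  unfold ttJ3 subXq mulAXQ
  simp only [Pi.add_apply]
  rw [ttH3_eq_F k i hk hi hik]
  by_cases hj : j = 0
  · simp [hj]
  · simp only [hj, if_false]
    rw [ttH3_pred k i hk hi hik]
    have e1 : N - 1 - (m - 1) = N - m := by ring
    rw [e1]

lemma ttJ3_vanish (k i : ℕ) (hk : 2 ≤ k) (hi : 1 ≤ i) (hik : i ≤ k) (j : ℕ) (m N : ℤ)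
    (hm : m < 0) : ttJ3 k (i:ℤ) j m N = 0 := by
  rw [ttJ3_eq k i hk hi hik, Fcf_vanish _ _ _ _ _ hm, Fcf_vanish _ _ _ _ _ (by omega)]
  simp

lemma hccM4 (k i : ℕ) (hk : 2 ≤ k) (hi : 1 ≤ i) (hik : i ≤ k) (j : ℕ) (m N : ℤ) (n : ℕ) :
    coeffZ (Rterm k i n) j m N
      = (coeffZ (ttHterm k i n) j m (N - m)
          + (if j = 0 then 0 else coeffZ (ttHterm k (i-1) n) (j-1) (m-1) (N - m)))
        + (coeffZ (ttHterm k i n) j (m-1) (N - m)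
          + (if j = 0 then 0 else coeffZ (ttHterm k (i-1) n) (j-1) (m-2) (N - m))) := by
  have hA : ∀ (P : MV) (j' : ℕ) (m' N' : ℤ), coeffZ (Av * (Xv * (Qv * P))) j' m' N'
      = if j' = 0 then 0 else coeffZ P (j'-1) (m'-1) (N'-1) := by
    intro P j' m' N'
    rw [coeffZ_A_mul]
    by_cases hj : j' = 0
    · simp [hj]
    · simp [hj, coeffZ_X_mul, coeffZ_Q_mul]
  have hXQ : ∀ (P : MV) (j' : ℕ) (m' N' : ℤ), coeffZ (Xv * (Qv * P)) j' m' N'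
      = coeffZ P j' (m'-1) (N'-1) := by
    intro P j' m' N'
    rw [coeffZ_X_mul, coeffZ_Q_mul]
  set S : MV := sig (ttHterm k i n) + Av * (Xv * (Qv * sig (ttHterm k (i-1) n))) with hS
  have hx : Rterm k i n = S + Xv * (Qv * S) := by
    rw [crux k i n hk hi hik, hS]
    ring
  rw [hx, coeffZ_add, hXQ, coeffZ_add, coeffZ_add, hA, hA]
  have e1 : N - 1 - (m - 1) = N - m := by ring
  have e3 : N - 1 - 1 - (m - 1 - 1) = N - m := by ring
  have e3' : N - 1 - 1 - (m - 2) = N - m := by ring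
  have e4 : m - 1 - 1 = m - 2 := by ring
  simp only [coeffZ_sig, e1, e3, e3', e4]

lemma M4 (k i : ℕ) (hk : 2 ≤ k) (hi : 1 ≤ i) (hik : i ≤ k) (j : ℕ) (m N : ℤ) :
    mulOnePlusXQ (ttJ3 k (i:ℤ)) j m N = ∑' n : ℕ, coeffZ (Rterm k i n) j m N := by
  unfold mulOnePlusXQ
  rw [ttJ3_eq k i hk hi hik, ttJ3_eq k i hk hi hik]
  have e1 : N - 1 - (m - 1) = N - m := by ring
  have e4 : m - 1 - 1 = m - 2 := by ring
  simp only [e1, e4]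
  rw [tsum_eq_range (m.toNat + 1) (fun n hn => Rterm_vanish k i n j m N hk (by omega))]
  unfold Fcf
  rw [tsum_eq_range (m.toNat + 1) (fun n hn => ttHterm_vanish k i n j m (N - m) hk (by omega)),
    tsum_eq_range (m.toNat + 1) (fun n hn => ttHterm_vanish k i n j (m-1) (N - m) hk (by omega))]
  by_cases hj : j = 0
  · simp only [hj, if_pos, add_zero]
    rw [← Finset.sum_add_distrib]
    symm
    refine Finset.sum_congr rfl fun n _ => ?_
    have h := hccM4 k i hk hi hik j m N n
    simpa [hj] using h
  · simp only [hj, if_false]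
    rw [tsum_eq_range (m.toNat + 1)
        (fun n hn => ttHterm_vanish k (i-1) n (j-1) (m-1) (N - m) hk (by omega)),
      tsum_eq_range (m.toNat + 1)
        (fun n hn => ttHterm_vanish k (i-1) n (j-1) (m-2) (N - m) hk (by omega)),
      ← Finset.sum_add_distrib, ← Finset.sum_add_distrib, ← Finset.sum_add_distrib]
    symm
    refine Finset.sum_congr rfl fun n _ => ?_
    have h := hccM4 k i hk hi hik j m N n
    simpa [hj] using h

lemma inv_mul_OnePlusXQ (f : CF) (h0 : ∀ j m N, m < 0 → f j m N = 0) :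
    invOnePlusXQ (mulOnePlusXQ f) = f := by
  funext j m N
  unfold invOnePlusXQ mulOnePlusXQ
  exact telescopeXQ (fun m' N' => f j m' N') (fun m' N' hm' => h0 j m' N' hm') m N

/-- the closed form of `tildetildeJ_{k,i}(a;x;q)`. -/
theorem stmt14 (k i : ℕ) (hk : 2 ≤ k) (hi1 : 1 ≤ i) (hik : i ≤ k) :
    ttJ3 k (i:ℤ) = invOnePlusXQ (fun j m N => ∑' n : ℕ, coeffZ (Rterm k i n) j m N) := by
  have h1 : mulOnePlusXQ (ttJ3 k (i:ℤ))
      = (fun j m N => ∑' n : ℕ, coeffZ (Rterm k i n) j m N) := by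
    funext j m N
    exact M4 k i hk hi1 hik j m N
  have h2 := inv_mul_OnePlusXQ (ttJ3 k (i:ℤ))
    (fun j m N hm => ttJ3_vanish k i hk hi1 hik j m N hm)
  rw [← h2, h1]

end BGG3
end
end

section
/- For every integer k ≥ 2, one has (1+xq) · tildetildeJ_{k,1}(a;x;q) = tildeJ_{k,2}(a;x;q) − axq · tildeJ_{k,1}(a;x;q), and moreover both sides equal tildeH_{k,2}(a;xq;q). -/
noncomputable section
namespace BGG3

lemma coeffZ_neg_left (P : MV) (j : ℕ) (m N : ℤ) (hm : m < 0) : coeffZ P j m N = 0 := by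
  rw [coeffZ, if_neg]
  rintro ⟨h, -⟩
  omega

lemma tH3_zero (k : ℕ) : tH3 k 0 = 0 := by
  funext j m N
  show tH3 k 0 j m N = 0
  unfold tH3
  refine Eq.trans (tsum_congr fun n => ?_) (tsum_zero : ∑' _ : ℕ, (0:ℂ) = 0)
  simp

lemma tH3_neg (k : ℕ) (j : ℕ) (m N : ℤ) : tH3 k (-1) j (m - 1) N = - tH3 k 1 j m N := by
  unfold tH3
  rw [← tsum_neg]
  refine tsum_congr fun n => ?_
  rw [neg_sub]
  congr 1
  · congr 1 <;> ring
  · congr 1 <;> ring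

lemma tH3_vanish (k : ℕ) (hk : 2 ≤ k) (j : ℕ) (m N : ℤ) (hm : m < 0) :
    tH3 k 2 j m N = 0 := by
  unfold tH3
  refine Eq.trans (tsum_congr fun n => ?_) (tsum_zero : ∑' _ : ℕ, (0:ℂ) = 0)
  have hK : 0 ≤ ((k:ℤ) - 1) * (n:ℤ) := by
    apply mul_nonneg
    · have : (2:ℤ) ≤ (k:ℤ) := by exact_mod_cast hk
      linarith
    · positivity
  rw [coeffZ_neg_left _ _ _ _ (by linarith), coeffZ_neg_left _ _ _ _ (by linarith), sub_self]

lemma mulAXQ_zero : mulAXQ 0 = 0 := by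
  funext j m N
  simp [mulAXQ]

lemma mulX_zero : mulX 0 = 0 := by
  funext j m N
  simp [mulX]

lemma subXq_zero : subXq 0 = 0 := by
  funext j m N
  simp [subXq]

lemma invOnePlusX_zero : invOnePlusX 0 = 0 := by
  funext j m N
  simp [invOnePlusX]

lemma comm1 (f : CF) : subXq (invOnePlusX f) = invOnePlusXQ (subXq f) := by
  funext j m N
  show invOnePlusX f j m (N - m) = _
  unfold invOnePlusX invOnePlusXQ subXq
  refine tsum_congr fun r => ?_
  rw [show N - (r:ℤ) - (m - (r:ℤ)) = N - m by ring]

lemma key (g : CF) (hg : ∀ j m N, m < 0 → g j m N = 0) :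
    mulOnePlusXQ (invOnePlusXQ g) = g := by
  funext j m N
  show invOnePlusXQ g j m N + invOnePlusXQ g j (m-1) (N-1) = g j m N
  unfold invOnePlusXQ
  set u : ℕ → ℂ := fun s => (-1:ℂ)^s * g j (m - s) (N - s) with hu
  have hM : ∀ s : ℕ, m < s → u s = 0 := by
    intro s hs
    simp only [hu]
    rw [hg j (m - s) (N - s) (by omega), mul_zero]
  set M := m.toNat + 1 with hMdef
  have h1 : ∑' r : ℕ, (-1:ℂ)^r * g j (m - r) (N - r) = ∑ r ∈ Finset.range M, u r := by
    apply tsum_eq_sum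
    intro r hr
    apply hM
    simp only [Finset.mem_range, not_lt] at hr
    omega
  have h2 : ∑' r : ℕ, (-1:ℂ)^r * g j (m - 1 - r) (N - 1 - r)
      = ∑ r ∈ Finset.range M, -u (r+1) := by
    rw [tsum_eq_sum (s := Finset.range M)]
    · refine Finset.sum_congr rfl fun r _ => ?_
      simp only [hu]
      push_cast
      rw [show m - ((r:ℤ)+1) = m - 1 - r by ring, show N - ((r:ℤ)+1) = N - 1 - r by ring]
      ring
    · intro r hr
      simp only [Finset.mem_range, not_lt] at hr
      rw [hg j (m - 1 - r) (N - 1 - r) (by omega), mul_zero]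
  rw [h1, h2]
  have hneg : ∑ r ∈ Finset.range M, -u (r+1) = -∑ r ∈ Finset.range M, u (r+1) := by
    exact Finset.sum_neg_distrib (f := fun r => u (r+1))
  have hsucc : ∑ r ∈ Finset.range (M+1), u r = (∑ r ∈ Finset.range M, u (r+1)) + u 0 :=
    Finset.sum_range_succ' u M
  have hss : ∑ r ∈ Finset.range (M+1), u r = (∑ r ∈ Finset.range M, u r) + u M :=
    Finset.sum_range_succ u M
  have huM : u M = 0 := hM M (by omega)
  have hu0 : u 0 = g j m N := by simp [hu]
  linear_combination hneg + hsucc - hss - huM + hu0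

theorem helper_second (k : ℕ) (hk : 2 ≤ k) :
    tJ3 k 2 - mulAXQ (tJ3 k 1) = subXq (tH3 k 2) := by
  have h0 := tH3_zero k
  have hJ1 : tJ3 k 1 = subXq (tH3 k 1) := by
    unfold tJ3
    rw [show (1:ℤ) - 1 = 0 by norm_num, h0, subXq_zero, mulAXQ_zero, add_zero]
  rw [hJ1]
  unfold tJ3
  rw [show (2:ℤ) - 1 = 1 by norm_num]
  abel

/-- `(1+xq)·tildetildeJ_{k,1}(a;x;q) = tildeJ_{k,2}(a;x;q) - axq·tildeJ_{k,1}(a;x;q)`,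
and both sides equal `tildeH_{k,2}(a;xq;q)`. -/
theorem stmt18 (k : ℕ) (hk : 2 ≤ k) :
    mulOnePlusXQ (ttJ3 k 1) = tJ3 k 2 - mulAXQ (tJ3 k 1) ∧
    tJ3 k 2 - mulAXQ (tJ3 k 1) = subXq (tH3 k 2) := by
  have hsec := helper_second k hk
  refine ⟨?_, hsec⟩
  rw [hsec]
  have httH0 : ttH3 k 0 = 0 := by
    funext j m N
    show ttH3 k 0 j m N = 0
    unfold ttH3 invOnePlusX
    refine Eq.trans (tsum_congr fun r => ?_) (tsum_zero : ∑' _ : ℕ, (0:ℂ) = 0)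
    have hz : (tH3 k (0+1) + mulX (tH3 k (0-1))) j (m - r) N = 0 := by
      rw [show (0:ℤ)+1 = 1 by norm_num, show (0:ℤ)-1 = -1 by norm_num]
      show tH3 k 1 j (m - r) N + mulX (tH3 k (-1)) j (m - r) N = 0
      show tH3 k 1 j (m - r) N + tH3 k (-1) j (m - r - 1) N = 0
      rw [tH3_neg k j (m - r) N, add_neg_cancel]
    rw [hz, mul_zero]
  have httH1 : ttH3 k 1 = invOnePlusX (tH3 k 2) := by
    unfold ttH3
    rw [show (1:ℤ)+1 = 2 by norm_num, show (1:ℤ)-1 = 0 by norm_num, tH3_zero,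
      mulX_zero, add_zero]
  have httJ : ttJ3 k 1 = invOnePlusXQ (subXq (tH3 k 2)) := by
    unfold ttJ3
    rw [show (1:ℤ)-1 = 0 by norm_num, httH0, httH1, subXq_zero, mulAXQ_zero, add_zero,
      comm1]
  rw [httJ]
  exact key (subXq (tH3 k 2)) fun j m N hm => tH3_vanish k hk j m (N - m) hm

end BGG3
end
end
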